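/- arXiv:2205.07189 — 2 statements merged into one kernel-verified Lean document; each statement's English description precedes it below -/
import Mathlib

section
/- Let G be a finite simple graph with at least one edge and let s be a positive integer. Then (i) χ_{vi,s}(G) ≤ max{χ_{i,s}(G), χ_l(G) + Δ(G) + s}; and (ii) if χ_{i,s}(G) ≥ χ_l(G) + Δ(G) + s, then χ_{vi,s}(G) = χ_{i,s}(G). -/
open SimpleGraph

variable {V : Type*}

/-- An *incidence* of `G`: a pair `(v, e)` where `e` is an edge of `G` and `v ∈ e`. -/
abbrev Inc (G : SimpleGraph V) : Type _ :=
  {p : V × Sym2 V // p.2 ∈ G.edgeSet ∧ p.1 ∈ p.2}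

/-- The elements to be colored in a vi-simultaneous coloring: vertices together with
incidences. -/
abbrev VIElem (G : SimpleGraph V) : Type _ := V ⊕ Inc G

/-- Adjacency between elements of `V(G) ∪ I(G)`: two vertices are adjacent when they are
adjacent in `G`; a vertex `u` and an incidence `(w, f)` are adjacent when `u ∈ f`; two
distinct incidences `(v, e)`, `(w, f)` are adjacent when `v = w`, or `e = f`, or
`{v, w} = e`, or `{v, w} = f`. -/
def VIAdj (G : SimpleGraph V) : VIElem G → VIElem G → Prop
  | Sum.inl u, Sum.inl w => G.Adj u w
  | Sum.inl u, Sum.inr i => u ∈ i.1.2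
  | Sum.inr i, Sum.inl u => u ∈ i.1.2
  | Sum.inr i, Sum.inr j => i ≠ j ∧
      (i.1.1 = j.1.1 ∨ i.1.2 = j.1.2 ∨ s(i.1.1, j.1.1) = i.1.2 ∨ s(i.1.1, j.1.1) = j.1.2)

/-- A vi-simultaneous proper `k`-coloring of `G`: adjacent or incident elements of
`V(G) ∪ I(G)` receive distinct colors. -/
def IsVIColoring (G : SimpleGraph V) {k : ℕ} (c : VIElem G → Fin k) : Prop :=
  ∀ a b, VIAdj G a b → c a ≠ c b

/-- The vi-simultaneous chromatic number `χ_vi(G)`: the least `k` admitting a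
vi-simultaneous proper `k`-coloring. -/
noncomputable def chiVI (G : SimpleGraph V) : ℕ :=
  sInf {k | ∃ c : VIElem G → Fin k, IsVIColoring G c}

/-- `I₂(v)`: the set of second incidences of a vertex `v`, i.e. incidences `(u, e)` with
`e = {u, v}` and `u ≠ v`. -/
def I2 (G : SimpleGraph V) (v : V) : Set (Inc G) :=
  {i | i.1.1 ≠ v ∧ i.1.2 = s(i.1.1, v)}

/-- A vi-simultaneous `(k, s)`-coloring: a vi-simultaneous proper `k`-coloring in which at
most `s` distinct colors appear on `I₂(v)` for every vertex `v`. -/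
def IsVISColoring (G : SimpleGraph V) (s : ℕ) {k : ℕ} (c : VIElem G → Fin k) : Prop :=
  IsVIColoring G c ∧ ∀ v : V, ((fun i => c (Sum.inr i)) '' I2 G v).ncard ≤ s

/-- `χ_{vi,s}(G)`: the least `k` admitting a vi-simultaneous `(k, s)`-coloring. -/
noncomputable def chiVIS (G : SimpleGraph V) (s : ℕ) : ℕ :=
  sInf {k | ∃ c : VIElem G → Fin k, IsVISColoring G s c}

/-- The maximum degree `Δ(G)` of a finite graph. -/
noncomputable def maxDeg [Fintype V] (G : SimpleGraph V) : ℕ :=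
  Finset.univ.sup fun v => (G.neighborSet v).ncard

/-- An incidence `k`-coloring of `G`: adjacent incidences receive distinct colors. -/
def IsIncColoring (G : SimpleGraph V) {k : ℕ} (c : Inc G → Fin k) : Prop :=
  ∀ i j : Inc G, VIAdj G (Sum.inr i) (Sum.inr j) → c i ≠ c j

/-- An incidence `(k, s)`-coloring of `G`: an incidence `k`-coloring in which at most `s`
distinct colors appear on `I₂(v)` for every vertex `v`. -/
def IsIncSColoring (G : SimpleGraph V) (s : ℕ) {k : ℕ} (c : Inc G → Fin k) : Prop :=
  IsIncColoring G c ∧ ∀ v : V, (c '' I2 G v).ncard ≤ s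

/-- `χ_{i,s}(G)`: the least `k` admitting an incidence `(k, s)`-coloring. -/
noncomputable def chiIS (G : SimpleGraph V) (s : ℕ) : ℕ :=
  sInf {k | ∃ c : Inc G → Fin k, IsIncSColoring G s c}

/-- `G` is `k`-choosable: for every assignment of lists of size `k` to the vertices there
is a proper coloring choosing each color from the corresponding list. -/
def Choosable (G : SimpleGraph V) (k : ℕ) : Prop :=
  ∀ L : V → Finset ℕ, (∀ v, (L v).card = k) →
    ∃ c : V → ℕ, (∀ v, c v ∈ L v) ∧ ∀ u w, G.Adj u w → c u ≠ c w

/-- The list chromatic number (choosability) `χ_l(G)`. -/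
noncomputable def listChromatic (G : SimpleGraph V) : ℕ :=
  sInf {k | Choosable G k}

/-!
An incidence `(k, s)`-coloring with `k ≥ χ_l + Δ + s` extends to a vi-simultaneous one: the
incidences on edges through `v` are the at most `Δ` incidences `(v, e)` and the second
incidences `I₂(v)`, which carry at most `s` colors, so at least `χ_l` colors remain free at
every vertex, and a list coloring of `G` from the free colors colors the vertices. Applied to an
optimal incidence coloring padded to `max (χ_{i,s}) (χ_l + Δ + s)` colors this gives (i).
Conversely, restricting a vi-simultaneous `(k, s)`-coloring to the incidences gives an
incidence `(k, s)`-coloring, whence (ii). Coloring `(v, {v, w})` by `w` shows that incidence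
`(k, s)`-colorings exist at all, so that `χ_{i,s}` is attained.
-/

namespace Inc

variable {G : SimpleGraph V}

noncomputable def other (i : Inc G) : V :=
  Sym2.Mem.other i.2.2

lemma mk_other (i : Inc G) : s(i.1.1, i.other) = i.1.2 :=
  Sym2.other_spec i.2.2

lemma adj_other (i : Inc G) : G.Adj i.1.1 i.other := by
  rw [← SimpleGraph.mem_edgeSet, mk_other]
  exact i.2.1

lemma mem_iff (i : Inc G) {x : V} : x ∈ i.1.2 ↔ x = i.1.1 ∨ x = i.other := by
  rw [← mk_other, Sym2.mem_iff]

lemma ext_other {i j : Inc G} (h : i.1.1 = j.1.1) (h' : i.other = j.other) : i = j :=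
  Subtype.ext (Prod.ext h (by rw [← mk_other, ← mk_other, h, h']))

lemma mem_I2_iff (i : Inc G) {v : V} : i ∈ I2 G v ↔ i.1.1 ≠ v ∧ i.other = v := by
  show i.1.1 ≠ v ∧ i.1.2 = s(i.1.1, v) ↔ _
  rw [← mk_other, Sym2.congr_right]

end Inc

section Coloring

variable {G : SimpleGraph V} {s : ℕ}

lemma setOf_mem_eq_union_I2 (v : V) :
    {i : Inc G | v ∈ i.1.2} = {i | i.1.1 = v} ∪ I2 G v := by
  ext i
  rw [Set.mem_union, Inc.mem_I2_iff]
  show v ∈ i.1.2 ↔ i.1.1 = v ∨ _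
  rw [Inc.mem_iff]
  grind

lemma ncard_setOf_fst_eq_le_maxDeg [Fintype V] (v : V) :
    {i : Inc G | i.1.1 = v}.ncard ≤ maxDeg G :=
  calc {i : Inc G | i.1.1 = v}.ncard
      ≤ (G.neighborSet v).ncard := by
        refine Set.ncard_le_ncard_of_injOn Inc.other ?_ ?_
        · rintro i (rfl : i.1.1 = v)
          exact i.adj_other
        · rintro i (hi : i.1.1 = v) j (hj : j.1.1 = v) h
          exact Inc.ext_other (hi.trans hj.symm) h
    _ ≤ maxDeg G := Finset.le_sup (f := fun v => (G.neighborSet v).ncard) (Finset.mem_univ v)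

lemma ncard_image_setOf_mem_le [Fintype V] {α : Type*} {c : Inc G → α}
    (hc : ∀ v, (c '' I2 G v).ncard ≤ s) (v : V) :
    (c '' {i : Inc G | v ∈ i.1.2}).ncard ≤ maxDeg G + s :=
  calc (c '' {i : Inc G | v ∈ i.1.2}).ncard
      ≤ (c '' {i : Inc G | i.1.1 = v}).ncard + (c '' I2 G v).ncard := by
        rw [setOf_mem_eq_union_I2, Set.image_union]
        exact Set.ncard_union_le _ _
    _ ≤ maxDeg G + s :=
        add_le_add ((Set.ncard_image_le (Set.toFinite _)).trans
          (ncard_setOf_fst_eq_le_maxDeg v)) (hc v)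

lemma isIncSColoring_comp_other {k : ℕ} {f : V → Fin k} (hf : Function.Injective f)
    (hs : 1 ≤ s) : IsIncSColoring G s (fun i => f i.other) := by
  refine ⟨?_, fun v => ?_⟩
  · rintro i j ⟨hij, hcase⟩ hc
    have h : i.other = j.other := hf hc
    refine hij (Inc.ext_other ?_ h)
    rcases hcase with h1 | h1 | h1 | h1
    · exact h1
    · have : i.1.1 ∈ j.1.2 := h1 ▸ i.2.2
      rw [Inc.mem_iff, ← h] at this
      exact this.resolve_right i.adj_other.ne
    · have : j.1.1 ∈ i.1.2 := h1 ▸ Sym2.mem_mk_right _ _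
      rw [Inc.mem_iff, h] at this
      exact (this.resolve_right j.adj_other.ne).symm
    · have : i.1.1 ∈ j.1.2 := h1 ▸ Sym2.mem_mk_left _ _
      rw [Inc.mem_iff, ← h] at this
      exact this.resolve_right i.adj_other.ne
  · have hsub : (fun i : Inc G => f i.other) '' I2 G v ⊆ {f v} := by
      rintro _ ⟨i, hi, rfl⟩
      show f i.other ∈ {f v}
      rw [((Inc.mem_I2_iff i).mp hi).2]
      exact Set.mem_singleton _
    exact (Set.ncard_le_ncard hsub).trans ((Set.ncard_singleton _).trans_le hs)

lemma exists_isIncSColoring [Fintype V] (hs : 1 ≤ s) :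
    ∃ k, ∃ c : Inc G → Fin k, IsIncSColoring G s c :=
  ⟨_, _, isIncSColoring_comp_other (Fintype.equivFin V).injective hs⟩

lemma IsIncSColoring.comp_injective {k k' : ℕ} {c : Inc G → Fin k} (hc : IsIncSColoring G s c)
    {g : Fin k → Fin k'} (hg : Function.Injective g) : IsIncSColoring G s (g ∘ c) := by
  refine ⟨fun i j hij => hg.ne (hc.1 i j hij), fun v => ?_⟩
  rw [Set.image_comp, Set.ncard_image_of_injective _ hg]
  exact hc.2 v

lemma IsVISColoring.isIncSColoring_inr {k : ℕ} {c : VIElem G → Fin k}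
    (hc : IsVISColoring G s c) : IsIncSColoring G s (c ∘ Sum.inr) :=
  ⟨fun i j hij => hc.1 (.inr i) (.inr j) hij, hc.2⟩

end Coloring

section Choosability

variable {G : SimpleGraph V}

/-- With lists of `|V|` colors, Hall's theorem even gives pairwise distinct choices. -/
lemma choosable_card [Fintype V] : Choosable G (Fintype.card V) := by
  intro L hL
  have hHall : ∀ A : Finset V, A.card ≤ (A.biUnion L).card := by
    intro A
    rcases A.eq_empty_or_nonempty with rfl | ⟨v, hv⟩
    · simp
    · calc A.card ≤ Fintype.card V := A.card_le_univ
        _ = (L v).card := (hL v).symm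
        _ ≤ (A.biUnion L).card := Finset.card_le_card (Finset.subset_biUnion_of_mem L hv)
  obtain ⟨c, hinj, hc⟩ := (Finset.all_card_le_biUnion_card_iff_exists_injective L).mp hHall
  exact ⟨c, hc, fun u w huw => hinj.ne huw.ne⟩

lemma choosable_listChromatic [Finite V] : Choosable G (listChromatic G) := by
  have := Fintype.ofFinite V
  exact Nat.sInf_mem (s := {k | Choosable G k}) ⟨_, choosable_card⟩

lemma Choosable.exists_coloring_avoiding {ℓ k : ℕ} (hG : Choosable G ℓ) (F : V → Set (Fin k))
    (hF : ∀ v, (F v).ncard + ℓ ≤ k) :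
    ∃ φ : V → Fin k, (∀ v, φ v ∉ F v) ∧ ∀ u w, G.Adj u w → φ u ≠ φ w := by
  classical
  let avail : V → Finset ℕ := fun v => (F v)ᶜ.toFinset.map Fin.valEmbedding
  have havail : ∀ v, ℓ ≤ (avail v).card := fun v => by
    have := hF v
    rw [Finset.card_map, Set.toFinset_compl, Finset.card_compl, Fintype.card_fin,
      ← Set.ncard_eq_toFinset_card']
    omega
  choose L hLsub hLcard using fun v => Finset.exists_subset_card_eq (havail v)
  obtain ⟨φ, hφL, hφ⟩ := hG L hLcard
  have hφ_avail : ∀ v, ∃ x : Fin k, x ∉ F v ∧ (x : ℕ) = φ v := fun v => by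
    simpa [avail] using hLsub v (hφL v)
  choose ψ hψF hψφ using hφ_avail
  refine ⟨ψ, hψF, fun u w huw h => hφ u w huw ?_⟩
  rw [← hψφ, ← hψφ, h]

end Choosability

lemma IsIncSColoring.exists_isVISColoring [Fintype V] {G : SimpleGraph V} {s k : ℕ}
    {c₀ : Inc G → Fin k} (hc₀ : IsIncSColoring G s c₀)
    (hk : listChromatic G + maxDeg G + s ≤ k) :
    ∃ c : VIElem G → Fin k, IsVISColoring G s c := by
  let F : V → Set (Fin k) := fun v => c₀ '' {i | v ∈ i.1.2}
  obtain ⟨φ, hφF, hφ⟩ := (choosable_listChromatic (G := G)).exists_coloring_avoiding F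
    fun v => by have := ncard_image_setOf_mem_le hc₀.2 v; dsimp only [F]; omega
  refine ⟨Sum.elim φ c₀, ?_, hc₀.2⟩
  rintro (u | i) (w | j) hadj h
  · exact hφ u w hadj h
  · exact hφF u ⟨j, hadj, h.symm⟩
  · exact hφF w ⟨i, hadj, h⟩
  · exact hc₀.1 i j hadj h

theorem chiVIS_le_max_chiIS_listChromatic_general {V : Type*} [Fintype V]
    (G : SimpleGraph V) (s : ℕ) (hs : 1 ≤ s) :
    chiVIS G s ≤ max (chiIS G s) (listChromatic G + maxDeg G + s) ∧
    (chiIS G s ≥ listChromatic G + maxDeg G + s → chiVIS G s = chiIS G s) := by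
  obtain ⟨c₀, hc₀⟩ : ∃ c : Inc G → Fin (chiIS G s), IsIncSColoring G s c :=
    Nat.sInf_mem (exists_isIncSColoring hs)
  have hvis : ∃ c : VIElem G → Fin (max (chiIS G s) (listChromatic G + maxDeg G + s)),
      IsVISColoring G s c :=
    (hc₀.comp_injective (Fin.castLE_injective (le_max_left _ _))).exists_isVISColoring
      (le_max_right _ _)
  have hle : chiVIS G s ≤ max (chiIS G s) (listChromatic G + maxDeg G + s) := Nat.sInf_le hvis
  refine ⟨hle, fun hge => le_antisymm (max_eq_left hge ▸ hle) ?_⟩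
  obtain ⟨c, hc⟩ : ∃ c : VIElem G → Fin (chiVIS G s), IsVISColoring G s c :=
    Nat.sInf_mem (show ∃ k, ∃ c : VIElem G → Fin k, IsVISColoring G s c from ⟨_, hvis⟩)
  exact Nat.sInf_le ⟨_, hc.isIncSColoring_inr⟩

/-- Let `G` be a finite simple graph with at least one edge and let `s`
be a positive integer. Then (i) `χ_{vi,s}(G) ≤ max {χ_{i,s}(G), χ_l(G) + Δ(G) + s}`, and
(ii) if `χ_{i,s}(G) ≥ χ_l(G) + Δ(G) + s` then `χ_{vi,s}(G) = χ_{i,s}(G)`. -/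
theorem chiVIS_le_max_chiIS_listChromatic {V : Type*} [Fintype V] [DecidableEq V]
    (G : SimpleGraph V) (hG : G.edgeSet.Nonempty) (s : ℕ) (hs : 1 ≤ s) :
    chiVIS G s ≤ max (chiIS G s) (listChromatic G + maxDeg G + s) ∧
    (chiIS G s ≥ listChromatic G + maxDeg G + s → chiVIS G s = chiIS G s) :=
  chiVIS_le_max_chiIS_listChromatic_general G s hs
end

section
/- Let G be a finite simple graph with maximum degree Δ. (i) If G is outerplanar, then χ_{vi,2}(G) ≤ Δ + 4. (ii) If G is planar, then χ_{vi,5}(G) ≤ Δ + 10. -/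
open SimpleGraph

variable {V : Type*}

/-- A graph is `k`-degenerate if every (nonempty, induced) subgraph has a vertex of degree
at most `k`; the degree of `v` in the subgraph induced on `s ∋ v` is `|N_G(v) ∩ s|`.
Every outerplanar graph is 2-degenerate and every planar graph is 5-degenerate, so the
hypotheses below capture outerplanarity/planarity in the form used in the paper's proof. -/
def Degenerate (k : ℕ) (G : SimpleGraph V) : Prop :=
  ∀ s : Set V, s.Nonempty → ∃ v ∈ s, (G.neighborSet v ∩ s).ncard ≤ k

/-!
Color `G` greedily along a degeneracy order, coloring a vertex `v` together with the incidences
`(v, vw)` and `(w, wv)` that join it to its at most `k` earlier neighbours `w`; the incidence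
`(x, xy)` is treated as the arc `x → y`. To keep at most `k` colors on every `I₂(x)`, each vertex
`x` carries a palette of `k` colors reserved for the arcs into `x`, and the new arc `v → w` takes
its color from the palette of `w`. Counting the forbidden colors, `Δ + 2k` colors then suffice
unless `Δ = k`. In that case `I₂(x)` has at most `Δ = k` elements anyway, and a proper
vi-coloring with `3k` colors exists: when coloring `v → w`, reuse a color already on an arc into
`w` whenever possible, which leaves one more color free for `w → v`.
-/

open Finset

section

open scoped Classical

variable {α ι : Type*} {G : SimpleGraph V}

namespace Inc

def ofAdj {x y : V} (h : G.Adj x y) : Inc G :=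
  ⟨(x, s(x, y)), G.mem_edgeSet.2 h, Sym2.mem_mk_left x y⟩

theorem exists_eq_ofAdj (i : Inc G) : ∃ x y, ∃ h : G.Adj x y, i = ofAdj h := by
  obtain ⟨⟨x, e⟩, he, hx⟩ := i
  induction e using Sym2.ind with
  | _ a b =>
  dsimp only at he hx
  rcases Sym2.mem_iff.1 hx with rfl | rfl
  · exact ⟨x, b, he, rfl⟩
  · exact ⟨x, a, G.adj_symm he, by simp [ofAdj, Sym2.eq_swap]⟩

end Inc

theorem viAdj_ofAdj_iff {x y x' y' : V} (h : G.Adj x y) (h' : G.Adj x' y') :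
    VIAdj G (.inr (Inc.ofAdj h)) (.inr (Inc.ofAdj h')) ↔
      (x, y) ≠ (x', y') ∧ (x = x' ∨ y = x' ∨ x = y') := by
  simp only [VIAdj, Inc.ofAdj, ne_eq, Subtype.mk.injEq, Prod.mk.injEq, Sym2.eq_iff]
  have := G.ne_of_adj h
  have := G.ne_of_adj h'
  grind

/-- The coloring of `V(G) ∪ I(G)` that gives the vertex `x` the color `f x` and the incidence
`(x, xy)`, viewed as the arc `x → y`, the color `g x y`. -/
noncomputable def ofArcs (f : V → α) (g : V → V → α) : VIElem G → α
  | .inl x => f x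
  | .inr i => g i.1.1 (Sym2.Mem.other i.2.2)

@[simp]
theorem ofArcs_ofAdj (f : V → α) (g : V → V → α) {x y : V} (h : G.Adj x y) :
    ofArcs f g (.inr (Inc.ofAdj h)) = g x y :=
  congrArg (g x) (Sym2.congr_right.1 (Sym2.other_spec _))

theorem image_I2_subset (f : V → α) (g : V → V → α) (v : V) :
    (fun i => ofArcs f g (.inr i)) '' I2 G v ⊆ (fun u => g u v) '' G.neighborSet v := by
  rintro _ ⟨i, ⟨-, he⟩, rfl⟩
  obtain ⟨x, y, h, rfl⟩ := i.exists_eq_ofAdj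
  obtain rfl : y = v := Sym2.congr_right.1 he
  exact ⟨x, h.symm, (ofArcs_ofAdj f g h).symm⟩

/-- A coloring of the vertices and arcs of `G[S]` (`g x y` colors the incidence `(x, xy)`) that
is proper for the vi-adjacency, see `IsArcColoringOn.isVIColoring_ofArcs`. -/
structure IsArcColoringOn (G : SimpleGraph V) (S : Finset V) (f : V → α) (g : V → V → α) :
    Prop where
  vertex_ne : ∀ ⦃x⦄, x ∈ S → ∀ ⦃y⦄, y ∈ S → G.Adj x y → f x ≠ f y
  tail_ne : ∀ ⦃x⦄, x ∈ S → ∀ ⦃y⦄, y ∈ S → G.Adj x y → f x ≠ g x y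
  head_ne : ∀ ⦃x⦄, x ∈ S → ∀ ⦃y⦄, y ∈ S → G.Adj x y → f y ≠ g x y
  sameTail_ne : ∀ ⦃x⦄, x ∈ S → ∀ ⦃y⦄, y ∈ S → ∀ ⦃z⦄, z ∈ S →
    G.Adj x y → G.Adj x z → y ≠ z → g x y ≠ g x z
  consecutive_ne : ∀ ⦃x⦄, x ∈ S → ∀ ⦃y⦄, y ∈ S → ∀ ⦃z⦄, z ∈ S →
    G.Adj x y → G.Adj y z → g x y ≠ g y z

theorem isArcColoringOn_empty (f : V → α) (g : V → V → α) : IsArcColoringOn G ∅ f g := by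
  constructor <;> simp

theorem IsArcColoringOn.isVIColoring_ofArcs [Fintype V] {N : ℕ} {f : V → Fin N}
    {g : V → V → Fin N} (hc : IsArcColoringOn G univ f g) : IsVIColoring G (ofArcs f g) := by
  have hU {x : V} : x ∈ univ := mem_univ x
  have vertex_inc {u x y : V} (h : G.Adj x y) (hu : u ∈ s(x, y)) :
      ofArcs (G := G) f g (.inl u) ≠ ofArcs f g (.inr (Inc.ofAdj h)) := by
    rcases Sym2.mem_iff.1 hu with rfl | rfl
    · rw [ofArcs_ofAdj]; exact hc.tail_ne hU hU h
    · rw [ofArcs_ofAdj]; exact hc.head_ne hU hU h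
  rintro (u | i) (u' | i') hadj
  · exact hc.vertex_ne hU hU hadj
  · obtain ⟨x, y, h, rfl⟩ := i'.exists_eq_ofAdj
    exact vertex_inc h hadj
  · obtain ⟨x, y, h, rfl⟩ := i.exists_eq_ofAdj
    exact (vertex_inc h hadj).symm
  · obtain ⟨x, y, h, rfl⟩ := i.exists_eq_ofAdj
    obtain ⟨x', y', h', rfl⟩ := i'.exists_eq_ofAdj
    obtain ⟨hne, rfl | rfl | rfl⟩ := (viAdj_ofAdj_iff h h').1 hadj
    · simpa using hc.sameTail_ne hU hU hU h h' (by simpa using hne)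
    · simpa using hc.consecutive_ne hU hU hU h h'
    · simpa using (hc.consecutive_ne hU hU hU h' h).symm

noncomputable def outColors (G : SimpleGraph V) (g : V → V → α) (S : Finset V) (w : V) :
    Finset α :=
  {z ∈ S | G.Adj w z}.image (g w)

noncomputable def inColors (G : SimpleGraph V) (g : V → V → α) (S : Finset V) (w : V) :
    Finset α :=
  {z ∈ S | G.Adj w z}.image (g · w)

theorem mem_outColors {g : V → V → α} {S : Finset V} {w z : V} (hz : z ∈ S) (h : G.Adj w z) :
    g w z ∈ outColors G g S w :=
  mem_image_of_mem _ (mem_filter.2 ⟨hz, h⟩)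

theorem mem_inColors {g : V → V → α} {S : Finset V} {w z : V} (hz : z ∈ S) (h : G.Adj z w) :
    g z w ∈ inColors G g S w :=
  mem_image_of_mem (g · w) (mem_filter.2 ⟨hz, h.symm⟩)

noncomputable def extendArcs (v : V) (β γ : V → α) (g : V → V → α) (x y : V) : α :=
  if x = v then β y else if y = v then γ x else g x y

theorem IsArcColoringOn.extend {S : Finset V} {v : V} {f : V → α} {g : V → V → α} {p : α}
    {β γ : V → α} (hc : IsArcColoringOn G S f g)
    (hp : ∀ w ∈ {w ∈ S | G.Adj v w}, p ≠ f w ∧ p ≠ β w ∧ p ≠ γ w)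
    (hβ : Set.InjOn β ↑({w ∈ S | G.Adj v w} : Finset V))
    (hβγ : ∀ w ∈ {w ∈ S | G.Adj v w}, ∀ w' ∈ {w ∈ S | G.Adj v w}, β w ≠ γ w')
    (hβ' : ∀ w ∈ {w ∈ S | G.Adj v w}, β w ≠ f w ∧ β w ∉ outColors G g S w)
    (hγ : ∀ w ∈ {w ∈ S | G.Adj v w},
      γ w ≠ f w ∧ γ w ∉ outColors G g S w ∧ γ w ∉ inColors G g S w) :
    IsArcColoringOn G (insert v S) (Function.update f v p) (extendArcs v β γ g) := by
  constructor <;> intro x hx y hy <;> simp only [mem_insert] at hx hy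
  · grind [SimpleGraph.irrefl, Adj.symm, Function.update, IsArcColoringOn.vertex_ne]
  · grind [SimpleGraph.irrefl, Adj.symm, Function.update, extendArcs, IsArcColoringOn.tail_ne]
  · grind [SimpleGraph.irrefl, Adj.symm, Function.update, extendArcs, IsArcColoringOn.head_ne]
  · intro z hz
    simp only [mem_insert] at hz
    grind [SimpleGraph.irrefl, Adj.symm, extendArcs, Set.InjOn, IsArcColoringOn.sameTail_ne,
      mem_outColors]
  · intro z hz
    simp only [mem_insert] at hz
    grind [SimpleGraph.irrefl, Adj.symm, extendArcs, IsArcColoringOn.consecutive_ne,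
      mem_outColors, mem_inColors]

/-- `A x` is a palette of `k` colors reserved for the arcs into `x`, i.e. for `I₂(x)`. -/
def IsArcPalette (G : SimpleGraph V) (k : ℕ) (S : Finset V) (f : V → α) (g : V → V → α)
    (A : V → Finset α) : Prop :=
  ∀ x ∈ S, #(A x) = k ∧ f x ∉ A x ∧ ∀ y ∈ S, G.Adj x y → g y x ∈ A x ∧ g x y ∉ A x

theorem IsArcPalette.extend {k : ℕ} {S : Finset V} {v : V} {f : V → α} {g : V → V → α}
    {A : V → Finset α} {p : α} {β γ : V → α} {T : Finset α}
    (hA : IsArcPalette G k S f g A) (hT : #T = k) (hpT : p ∉ T)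
    (hβ : ∀ w ∈ {w ∈ S | G.Adj v w}, β w ∈ A w ∧ β w ∉ T)
    (hγ : ∀ w ∈ {w ∈ S | G.Adj v w}, γ w ∉ A w ∧ γ w ∈ T) :
    IsArcPalette G k (insert v S) (Function.update f v p) (extendArcs v β γ g)
      (Function.update A v T) := by
  intro x hx
  simp only [mem_insert] at hx
  grind [IsArcPalette, extendArcs, Function.update, SimpleGraph.irrefl, Adj.symm]

theorem ncard_neighborSet_le_maxDeg [Fintype V] (v : V) : (G.neighborSet v).ncard ≤ maxDeg G :=
  le_sup (f := fun v => (G.neighborSet v).ncard) (mem_univ v)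

theorem card_le_maxDeg_of_subset_neighborSet [Fintype V] {w : V} {T : Finset V}
    (h : ↑T ⊆ G.neighborSet w) : #T ≤ maxDeg G :=
  (Set.ncard_coe_finset T ▸ Set.ncard_le_ncard h).trans (ncard_neighborSet_le_maxDeg w)

theorem card_filter_adj_le_maxDeg [Fintype V] (S : Finset V) (w : V) :
    #{z ∈ S | G.Adj w z} ≤ maxDeg G :=
  card_le_maxDeg_of_subset_neighborSet fun _ hz => (mem_filter.1 hz).2

theorem card_filter_adj_lt_maxDeg [Fintype V] {S : Finset V} {v w : V} (hv : v ∉ S)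
    (h : G.Adj w v) : #{z ∈ S | G.Adj w z} < maxDeg G := by
  have hv' : v ∉ {z ∈ S | G.Adj w z} := fun hv' => hv (mem_filter.1 hv').1
  have := card_le_maxDeg_of_subset_neighborSet (G := G) (w := w)
    (T := insert v {z ∈ S | G.Adj w z}) (by
      intro z hz
      rcases mem_insert.1 hz with rfl | hz
      · exact h
      · exact (mem_filter.1 hz).2)
  rwa [card_insert_of_notMem hv'] at this

theorem card_outColors_lt_maxDeg [Fintype V] (g : V → V → α) {S : Finset V} {v w : V}
    (hv : v ∉ S) (h : G.Adj w v) : #(outColors G g S w) < maxDeg G :=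
  card_image_le.trans_lt (card_filter_adj_lt_maxDeg hv h)

theorem card_inColors_lt_maxDeg [Fintype V] (g : V → V → α) {S : Finset V} {v w : V}
    (hv : v ∉ S) (h : G.Adj w v) : #(inColors G g S w) < maxDeg G :=
  card_image_le.trans_lt (card_filter_adj_lt_maxDeg hv h)

@[elab_as_elim]
theorem Degenerate.induction_on {k : ℕ} (hG : Degenerate k G) {P : Finset V → Prop}
    (S : Finset V) (empty : P ∅)
    (insert : ∀ ⦃v S⦄, v ∉ S → #{w ∈ S | G.Adj v w} ≤ k → P S → P (insert v S)) : P S := by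
  induction S using Finset.strongInduction with
  | H S ih =>
  rcases S.eq_empty_or_nonempty with rfl | hS
  · exact empty
  obtain ⟨v, hv, hdeg⟩ := hG S (coe_nonempty.2 hS)
  have hS : #{w ∈ S | G.Adj v w} ≤ k := by
    have : G.neighborSet v ∩ ↑S = ↑{w ∈ S | G.Adj v w} := by ext; simp [and_comm]
    rwa [this, Set.ncard_coe_finset] at hdeg
  rw [← insert_erase hv]
  refine insert (notMem_erase v S) ?_ (ih _ (erase_ssubset hv))
  exact (card_le_card (filter_subset_filter _ (erase_subset v S))).trans hS

theorem exists_notMem_of_card_lt [Fintype α] {F : Finset α} (h : #F < Fintype.card α) :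
    ∃ a, a ∉ F := by
  obtain ⟨a, -, ha⟩ := exists_mem_notMem_of_card_lt_card (t := univ) (by simpa)
  exact ⟨a, ha⟩

theorem card_union_lt_of_mem_inter {s t : Finset α} {a : α} (hs : a ∈ s) (ht : a ∈ t) :
    #(s ∪ t) < #s + #t := by
  have := card_union_add_card_inter s t
  have : 0 < #(s ∩ t) := card_pos.2 ⟨a, mem_inter.2 ⟨hs, ht⟩⟩
  omega

theorem exists_forall_notMem [Fintype α] [Nonempty α] (W : Finset ι) (F : ι → Finset α)
    (h : ∀ i ∈ W, #(F i) < Fintype.card α) : ∃ γ : ι → α, ∀ i ∈ W, γ i ∉ F i := by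
  have (i : ι) : ∃ a, i ∈ W → a ∉ F i := by
    by_cases hi : i ∈ W
    · obtain ⟨a, ha⟩ := exists_notMem_of_card_lt (h i hi)
      exact ⟨a, fun _ => ha⟩
    · exact ⟨Classical.arbitrary α, fun h => absurd h hi⟩
  choose γ hγ using this
  exact ⟨γ, hγ⟩

/-- Greedy distinct representatives `b i ∈ Q i`, where `b i` is taken from the preferred set `P i`
unless all of `P i ∩ Q i` is used by `b` anyway. -/
theorem exists_injOn_mem_of_card_le [Nonempty α] (W : Finset ι) (Q P : ι → Finset α)
    (hQ : ∀ i ∈ W, #W ≤ #(Q i)) :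
    ∃ b : ι → α, Set.InjOn b W ∧
      ∀ i ∈ W, b i ∈ Q i ∧ (b i ∈ P i ∨ P i ∩ Q i ⊆ W.image b) := by
  induction W using Finset.induction_on with
  | empty => exact ⟨fun _ => Classical.arbitrary α, by simp, by simp⟩
  | insert a s ha ih =>
  obtain ⟨b, hinj, hb⟩ := ih fun i hi =>
    (card_le_card (subset_insert a s)).trans (hQ i (mem_insert_of_mem hi))
  have hfree : (Q a \ s.image b).Nonempty := by
    rw [← card_pos]
    have h1 := le_card_sdiff (s.image b) (Q a)
    have h2 := hQ a (mem_insert_self a s)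
    have h3 : #(s.image b) ≤ #s := card_image_le
    rw [card_insert_of_notMem ha] at h2
    omega
  obtain ⟨c, hcQ, hcP⟩ : ∃ c ∈ Q a \ s.image b, c ∈ P a ∨ P a ∩ Q a ⊆ s.image b := by
    by_cases hpref : ((P a ∩ Q a) \ s.image b).Nonempty
    · obtain ⟨c, hc⟩ := hpref
      simp only [mem_sdiff, mem_inter] at hc
      exact ⟨c, mem_sdiff.2 ⟨hc.1.2, hc.2⟩, Or.inl hc.1.1⟩
    · obtain ⟨c, hc⟩ := hfree
      exact ⟨c, hc, Or.inr fun x hx => by_contra fun h => hpref ⟨x, mem_sdiff.2 ⟨hx, h⟩⟩⟩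
  refine ⟨Function.update b a c, ?_, ?_⟩
  · grind [Set.InjOn, Function.update]
  · have himage : s.image b ⊆ (insert a s).image (Function.update b a c) := by
      intro x hx
      obtain ⟨j, hj, rfl⟩ := mem_image.1 hx
      refine mem_image.2 ⟨j, mem_insert_of_mem hj, ?_⟩
      rw [Function.update_of_ne (ne_of_mem_of_not_mem hj ha)]
    intro i hi
    rcases mem_insert.1 hi with rfl | hi
    · rw [Function.update_self]
      exact ⟨(mem_sdiff.1 hcQ).1, hcP.imp_right (·.trans himage)⟩
    · rw [Function.update_of_ne (ne_of_mem_of_not_mem hi ha)]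
      exact ⟨(hb i hi).1, (hb i hi).2.imp_right (·.trans himage)⟩

theorem exists_arcColoring_insert_of_maxDeg_le [Fintype V] [Fintype α] {k : ℕ} (hk : 2 ≤ k)
    (hΔ : maxDeg G ≤ k) (hα : 3 * k ≤ Fintype.card α) {S : Finset V} {v : V} (hv : v ∉ S)
    {f : V → α} {g : V → V → α} (hc : IsArcColoringOn G S f g) :
    ∃ (f' : V → α) (g' : V → V → α), IsArcColoringOn G (insert v S) f' g' := by
  set W := {w ∈ S | G.Adj v w}
  have hWk : #W ≤ k := (card_filter_adj_le_maxDeg S v).trans hΔ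
  have hWS {w : V} (hw : w ∈ W) : w ∈ S ∧ G.Adj v w := mem_filter.1 hw
  have hcardW (h : V → α) : #(W.image h) ≤ #W := card_image_le
  have : Nonempty α := Fintype.card_pos_iff.1 (by omega)
  obtain ⟨p, hp⟩ := exists_notMem_of_card_lt (F := W.image f) (by have := hcardW f; omega)
  set Fh : V → Finset α := fun w => insert p (insert (f w) (outColors G g S w))
  have hFh (w : V) (hw : w ∈ W) : #(Fh w) ≤ k + 1 := by
    show #(insert p (insert (f w) (outColors G g S w))) ≤ k + 1
    have := card_outColors_lt_maxDeg g hv (hWS hw).2.symm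
    have := card_insert_le p (insert (f w) (outColors G g S w))
    have := card_insert_le (f w) (outColors G g S w)
    omega
  have hin (w : V) (hw : w ∈ W) : #(inColors G g S w) < k :=
    (card_inColors_lt_maxDeg g hv (hWS hw).2.symm).trans_le hΔ
  obtain ⟨β, hβinj, hβ⟩ := exists_injOn_mem_of_card_le W (fun w => univ \ Fh w)
    (inColors G g S) fun w hw => by
      rw [card_sdiff_of_subset (subset_univ _), card_univ]
      have := hFh w hw
      omega
  obtain ⟨γ, hγ⟩ := exists_forall_notMem W (fun w => Fh w ∪ (inColors G g S w ∪ W.image β))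
    fun w hw => by
      have := card_union_le (Fh w) (inColors G g S w ∪ W.image β)
      have := card_union_le (inColors G g S w) (W.image β)
      have := hcardW β
      have := hFh w hw
      have := hin w hw
      rcases (hβ w hw).2 with hpref | hused
      · have := card_union_lt_of_mem_inter hpref (mem_image_of_mem β hw)
        omega
      · -- `β w` could not reuse a color of `inColors`: all of them are already forbidden
        have hsub : Fh w ∪ (inColors G g S w ∪ W.image β) ⊆ Fh w ∪ W.image β := by grind
        have := card_le_card hsub
        have := card_union_le (Fh w) (W.image β)
        omega
  exact ⟨Function.update f v p, extendArcs v β γ g,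
    hc.extend (by grind) hβinj (by grind) (by grind) (by grind)⟩

theorem exists_arcColoring_of_maxDeg_le [Fintype V] [Fintype α] {k : ℕ} (hk : 2 ≤ k)
    (hΔ : maxDeg G ≤ k) (hα : 3 * k ≤ Fintype.card α) (S : Finset V) :
    ∃ (f : V → α) (g : V → V → α), IsArcColoringOn G S f g := by
  have : Nonempty α := Fintype.card_pos_iff.1 (by omega)
  induction S using Finset.induction_on with
  | empty => exact ⟨_, _, isArcColoringOn_empty (fun _ => Classical.arbitrary α)
      (fun _ _ => Classical.arbitrary α)⟩
  | insert v S hv ih =>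
    obtain ⟨f, g, hc⟩ := ih
    exact exists_arcColoring_insert_of_maxDeg_le hk hΔ hα hv hc

theorem exists_arcColoring_palette_insert [Fintype V] [Fintype α] {k : ℕ}
    (hΔ : maxDeg G ≠ k) (hα : maxDeg G + 2 * k ≤ Fintype.card α) {S : Finset V} {v : V}
    (hv : v ∉ S) (hdeg : #{w ∈ S | G.Adj v w} ≤ k) {f : V → α} {g : V → V → α}
    {A : V → Finset α} (hc : IsArcColoringOn G S f g) (hA : IsArcPalette G k S f g A) :
    ∃ (f' : V → α) (g' : V → V → α) (A' : V → Finset α),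
      IsArcColoringOn G (insert v S) f' g' ∧ IsArcPalette G k (insert v S) f' g' A' := by
  set W := {w ∈ S | G.Adj v w}
  have hWΔ : #W ≤ maxDeg G := card_filter_adj_le_maxDeg S v
  have hWS {w : V} (hw : w ∈ W) : w ∈ S ∧ G.Adj v w := mem_filter.1 hw
  have hcardW (h : V → α) : #(W.image h) ≤ #W := card_image_le
  have : Nonempty α := Fintype.card_pos_iff.1 (by omega)
  obtain ⟨β, hβinj, hβ⟩ := exists_injOn_mem_of_card_le W A (fun _ => ∅) fun w hw => by
    rw [(hA w (hWS hw).1).1]; exact hdeg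
  obtain ⟨γ, hγ⟩ := exists_forall_notMem W
    (fun w => insert (f w) (outColors G g S w ∪ (W.image β ∪ A w))) fun w hw => by
      have := card_outColors_lt_maxDeg g hv (hWS hw).2.symm
      have hβA := card_union_lt_of_mem_inter (mem_image_of_mem β hw) (hβ w hw).1
      have := card_insert_le (f w) (outColors G g S w ∪ (W.image β ∪ A w))
      have := card_union_le (outColors G g S w) (W.image β ∪ A w)
      have := hcardW β
      rw [(hA w (hWS hw).1).1] at hβA
      omega
  -- `3 #W < Δ + 2k` because `#W ≤ min Δ k` and `Δ ≠ k`
  obtain ⟨p, hp⟩ := exists_notMem_of_card_lt (F := W.image f ∪ W.image β ∪ W.image γ) (by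
    have := card_union_le (W.image f ∪ W.image β) (W.image γ)
    have := card_union_le (W.image f) (W.image β)
    have := hcardW f; have := hcardW β; have := hcardW γ
    omega)
  obtain ⟨T, hγT, hT, hTk⟩ := exists_subsuperset_card_eq
    (s := W.image γ) (t := univ \ insert p (W.image β)) (n := k) (by grind)
    (by have := hcardW γ; omega) (by
      have := card_insert_le p (W.image β)
      have := hcardW β
      rw [card_sdiff_of_subset (subset_univ _), card_univ]
      omega)
  refine ⟨Function.update f v p, extendArcs v β γ g, Function.update A v T, ?_, ?_⟩
  · refine hc.extend ?_ hβinj ?_ ?_ ?_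
    · grind
    · grind
    · grind [IsArcPalette, outColors]
    · grind [IsArcPalette, outColors, inColors]
  · exact hA.extend hTk (by grind) (by grind) (by grind)

theorem exists_arcColoring_palette [Fintype V] [Fintype α] {k : ℕ} (hG : Degenerate k G)
    (hΔ : maxDeg G ≠ k) (hα : maxDeg G + 2 * k ≤ Fintype.card α) (S : Finset V) :
    ∃ (f : V → α) (g : V → V → α) (A : V → Finset α),
      IsArcColoringOn G S f g ∧ IsArcPalette G k S f g A := by
  have : Nonempty α := Fintype.card_pos_iff.1 (by omega)
  refine hG.induction_on S ?_ ?_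
  · exact ⟨_, _, fun _ => ∅, isArcColoringOn_empty (fun _ => Classical.arbitrary α)
      (fun _ _ => Classical.arbitrary α), by simp [IsArcPalette]⟩
  · rintro v S hv hdeg ⟨f, g, A, hc, hA⟩
    exact exists_arcColoring_palette_insert hΔ hα hv hdeg hc hA

theorem exists_isVISColoring_of_degenerate [Fintype V] {k : ℕ} (hk : 2 ≤ k)
    (hG : Degenerate k G) : ∃ c : VIElem G → Fin (maxDeg G + 2 * k), IsVISColoring G k c := by
  by_cases hΔ : maxDeg G = k
  · obtain ⟨f, g, hc⟩ := exists_arcColoring_of_maxDeg_le hk hΔ.le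
      (α := Fin (maxDeg G + 2 * k)) (by simp; omega) univ
    refine ⟨ofArcs f g, hc.isVIColoring_ofArcs, fun v => ?_⟩
    calc _ ≤ ((fun u => g u v) '' G.neighborSet v).ncard :=
          Set.ncard_le_ncard (image_I2_subset f g v) (Set.toFinite _)
      _ ≤ (G.neighborSet v).ncard := Set.ncard_image_le (Set.toFinite _)
      _ ≤ k := hΔ ▸ ncard_neighborSet_le_maxDeg v
  · obtain ⟨f, g, A, hc, hA⟩ := exists_arcColoring_palette hG hΔ
      (α := Fin (maxDeg G + 2 * k)) (by simp) univ
    refine ⟨ofArcs f g, hc.isVIColoring_ofArcs, fun v => ?_⟩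
    have hsub : (fun i => ofArcs f g (.inr i)) '' I2 G v ⊆ ↑(A v) := by
      refine (image_I2_subset f g v).trans ?_
      rintro _ ⟨u, hu, rfl⟩
      exact ((hA v (mem_univ v)).2.2 u (mem_univ u) hu).1
    calc _ ≤ (↑(A v) : Set _).ncard := Set.ncard_le_ncard hsub (Set.toFinite _)
      _ = k := by rw [Set.ncard_coe_finset, (hA v (mem_univ v)).1]

theorem chiVIS_le_maxDeg_add_of_degenerate [Fintype V] {k : ℕ} (hk : 2 ≤ k)
    (hG : Degenerate k G) : chiVIS G k ≤ maxDeg G + 2 * k :=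
  Nat.sInf_le (exists_isVISColoring_of_degenerate hk hG)

end

theorem chiVIS_outerplanar_planar_general {V : Type*} [Fintype V]
    (G : SimpleGraph V) :
    (Degenerate 2 G → chiVIS G 2 ≤ maxDeg G + 4) ∧
    (Degenerate 5 G → chiVIS G 5 ≤ maxDeg G + 10) :=
  ⟨chiVIS_le_maxDeg_add_of_degenerate le_rfl, chiVIS_le_maxDeg_add_of_degenerate (by norm_num)⟩

/-- Let `G` be a finite simple graph with maximum degree `Δ`.
(i) If `G` is outerplanar (hence 2-degenerate), then `χ_{vi,2}(G) ≤ Δ + 4`.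
(ii) If `G` is planar (hence 5-degenerate), then `χ_{vi,5}(G) ≤ Δ + 10`. -/
theorem chiVIS_outerplanar_planar {V : Type*} [Fintype V] [DecidableEq V]
    (G : SimpleGraph V) :
    (Degenerate 2 G → chiVIS G 2 ≤ maxDeg G + 4) ∧
    (Degenerate 5 G → chiVIS G 5 ≤ maxDeg G + 10) :=
  chiVIS_outerplanar_planar_general G
end
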